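/- arXiv:1106.2139 — 7 statements merged into one kernel-verified Lean document; each statement's English description precedes it below -/
import Mathlib

section
/- Suppose the multiplier M_{m,Λ,Θ} is well defined and invertible on H, and Θ = {Θ_i} is a g-Bessel sequence with bound B_Θ. Then the family mΛ = {m_i Λ_i} satisfies the lower g-frame condition with bound 1/(B_Θ ‖M_{m,Λ,Θ}^{-1}‖²), i.e., ∑_{i∈J} |m_i|² ‖Λ_i f‖² ≥ ‖f‖²/(B_Θ ‖M_{m,Λ,Θ}^{-1}‖²) for all f ∈ H. -/
/-!
Write `f = M g` with `g = M⁻¹ f`. Then `‖f‖² = ⟪f, M g⟫ = ∑ mᵢ ⟪Λᵢ f, Θᵢ g⟫`, and the Cauchy–Schwarz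
inequality in `ℓ²` followed by the Bessel bound gives
`‖f‖⁴ ≤ (∑ |mᵢ|² ‖Λᵢ f‖²) · B_Θ ‖g‖² ≤ (∑ |mᵢ|² ‖Λᵢ f‖²) · B_Θ ‖M⁻¹‖² ‖f‖²`.
-/

open ContinuousLinearMap
local notation "⟪" x ", " y "⟫" => @inner ℂ _ _ x y

theorem ENNReal.ofReal_le_tsum_ofReal {ι : Type*} {a : ι → ℝ} {x : ℝ} (ha : ∀ i, 0 ≤ a i)
    (h : Summable a → x ≤ ∑' i, a i) : ENNReal.ofReal x ≤ ∑' i, ENNReal.ofReal (a i) := by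
  by_cases hs : Summable a
  · rw [← ENNReal.ofReal_tsum_of_nonneg ha hs]
    exact ENNReal.ofReal_le_ofReal (h hs)
  · suffices ∑' i, ENNReal.ofReal (a i) = ⊤ by simp [this]
    by_contra hne
    refine hs ((NNReal.summable_coe.2 (ENNReal.tsum_coe_ne_top_iff_summable.1 hne)).congr ?_)
    exact fun i => Real.coe_toNNReal _ (ha i)

theorem sq_tsum_mul_le_of_nonneg {ι : Type*} {a b : ι → ℝ} (ha : ∀ i, 0 ≤ a i) (hb : ∀ i, 0 ≤ b i)
    (ha2 : Summable fun i => a i ^ 2) (hb2 : Summable fun i => b i ^ 2) :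
    Summable (fun i => a i * b i) ∧
      (∑' i, a i * b i) ^ 2 ≤ (∑' i, a i ^ 2) * ∑' i, b i ^ 2 := by
  simp only [← Real.rpow_natCast, Nat.cast_ofNat] at ha2 hb2
  obtain ⟨hsum, hle⟩ :=
    Real.summable_and_inner_le_Lp_mul_Lq_tsum_of_nonneg .two_two ha hb ha2 hb2
  simp only [Real.rpow_ofNat, ← Real.sqrt_eq_rpow] at hle
  refine ⟨hsum, ?_⟩
  calc (∑' i, a i * b i) ^ 2 ≤ (√(∑' i, a i ^ 2) * √(∑' i, b i ^ 2)) ^ 2 :=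
        pow_le_pow_left₀ (tsum_nonneg fun i => mul_nonneg (ha i) (hb i)) hle 2
    _ = (∑' i, a i ^ 2) * ∑' i, b i ^ 2 := by
        rw [mul_pow, Real.sq_sqrt (tsum_nonneg fun i => sq_nonneg _),
          Real.sq_sqrt (tsum_nonneg fun i => sq_nonneg _)]

section Bessel

variable {𝕜 E ι : Type*} {F : ι → Type*} [NormedField 𝕜] [NormedAddCommGroup E] [NormedSpace 𝕜 E]
  [∀ i, NormedAddCommGroup (F i)] [∀ i, NormedSpace 𝕜 (F i)]

def IsGBesselSeq (Θ : ∀ i, E →L[𝕜] F i) (B : ℝ) : Prop :=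
  ∀ f : E, ∃ s : ℝ, HasSum (fun i => ‖Θ i f‖ ^ 2) s ∧ s ≤ B * ‖f‖ ^ 2

variable {Θ : ∀ i, E →L[𝕜] F i} {B : ℝ}

theorem IsGBesselSeq.summable (hΘ : IsGBesselSeq Θ B) (f : E) :
    Summable fun i => ‖Θ i f‖ ^ 2 :=
  let ⟨_, hs, _⟩ := hΘ f; hs.summable

theorem IsGBesselSeq.tsum_le (hΘ : IsGBesselSeq Θ B) (f : E) :
    ∑' i, ‖Θ i f‖ ^ 2 ≤ B * ‖f‖ ^ 2 :=
  let ⟨_, hs, hle⟩ := hΘ f; hs.tsum_eq ▸ hle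

theorem IsGBesselSeq.bound_nonneg (hΘ : IsGBesselSeq Θ B) {f : E} (hf : f ≠ 0) : 0 ≤ B := by
  have hpos : 0 < ‖f‖ ^ 2 := by positivity
  exact nonneg_of_mul_nonneg_left ((tsum_nonneg fun i => sq_nonneg _).trans (hΘ.tsum_le f)) hpos

end Bessel

section Multiplier

variable {𝕜 E ι : Type*} {F : ι → Type*} [RCLike 𝕜] [NormedAddCommGroup E] [InnerProductSpace 𝕜 E]
  [CompleteSpace E] [∀ i, NormedAddCommGroup (F i)] [∀ i, InnerProductSpace 𝕜 (F i)]
  [∀ i, CompleteSpace (F i)] {Λ Θ : ∀ i, E →L[𝕜] F i} {m : ι → 𝕜}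

theorem sq_norm_inner_le_of_hasSum_multiplier {f g y : E}
    (hy : HasSum (fun i => m i • adjoint (Λ i) (Θ i g)) y)
    (hΛ : Summable fun i => ‖m i‖ ^ 2 * ‖Λ i f‖ ^ 2) (hΘ : Summable fun i => ‖Θ i g‖ ^ 2) :
    ‖inner 𝕜 f y‖ ^ 2 ≤ (∑' i, ‖m i‖ ^ 2 * ‖Λ i f‖ ^ 2) * ∑' i, ‖Θ i g‖ ^ 2 := by
  have hsq : ∀ i, (‖m i‖ * ‖Λ i f‖) ^ 2 = ‖m i‖ ^ 2 * ‖Λ i f‖ ^ 2 := fun i => mul_pow _ _ _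
  obtain ⟨hsum, hCS⟩ := sq_tsum_mul_le_of_nonneg (a := fun i => ‖m i‖ * ‖Λ i f‖)
    (b := fun i => ‖Θ i g‖) (fun i => by positivity) (fun i => norm_nonneg _)
    (by simpa only [hsq] using hΛ) hΘ
  have hterm : ∀ i, ‖inner 𝕜 f (m i • adjoint (Λ i) (Θ i g))‖ ≤ ‖m i‖ * ‖Λ i f‖ * ‖Θ i g‖ := by
    intro i
    rw [inner_smul_right, norm_mul, adjoint_inner_right, mul_assoc]
    gcongr
    exact norm_inner_le_norm _ _
  have hnorm : ‖inner 𝕜 f y‖ ≤ ∑' i, ‖m i‖ * ‖Λ i f‖ * ‖Θ i g‖ :=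
    ((innerSL 𝕜 f).hasSum hy).norm_le_of_bounded hsum.hasSum hterm
  calc ‖inner 𝕜 f y‖ ^ 2 ≤ (∑' i, ‖m i‖ * ‖Λ i f‖ * ‖Θ i g‖) ^ 2 :=
        pow_le_pow_left₀ (norm_nonneg _) hnorm 2
    _ ≤ _ := by simpa only [hsq] using hCS

theorem norm_sq_le_tsum_mul_of_multiplier {B : ℝ} (hΘ : IsGBesselSeq Θ B) (hB : 0 ≤ B)
    {M Minv : E →L[𝕜] E} (hM : ∀ g, HasSum (fun i => m i • adjoint (Λ i) (Θ i g)) (M g))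
    (hMinv : M * Minv = 1) {f : E} (hS : Summable fun i => ‖m i‖ ^ 2 * ‖Λ i f‖ ^ 2) :
    ‖f‖ ^ 2 ≤ (∑' i, ‖m i‖ ^ 2 * ‖Λ i f‖ ^ 2) * (B * ‖Minv‖ ^ 2) := by
  set S := ∑' i, ‖m i‖ ^ 2 * ‖Λ i f‖ ^ 2
  have hS0 : 0 ≤ S := tsum_nonneg fun i => by positivity
  have hMf : M (Minv f) = f := by simpa using congr($hMinv f)
  have key : (‖f‖ ^ 2) ^ 2 ≤ S * (B * ‖Minv‖ ^ 2) * ‖f‖ ^ 2 :=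
    calc (‖f‖ ^ 2) ^ 2 = ‖inner 𝕜 f (M (Minv f))‖ ^ 2 := by
          rw [hMf, inner_self_eq_norm_sq_to_K, norm_pow, norm_algebraMap', norm_norm]
      _ ≤ S * ∑' i, ‖Θ i (Minv f)‖ ^ 2 :=
          sq_norm_inner_le_of_hasSum_multiplier (hM _) hS (hΘ.summable _)
      _ ≤ S * (B * ‖Minv f‖ ^ 2) := by gcongr; exact hΘ.tsum_le _
      _ ≤ S * (B * (‖Minv‖ * ‖f‖) ^ 2) := by gcongr; exact Minv.le_opNorm f
      _ = S * (B * ‖Minv‖ ^ 2) * ‖f‖ ^ 2 := by ring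
  have hC : 0 ≤ S * (B * ‖Minv‖ ^ 2) := by positivity
  nlinarith

end Multiplier

theorem stmt3 {H : Type*} [NormedAddCommGroup H] [InnerProductSpace ℂ H] [CompleteSpace H]
    {J : Type*} {Hi : J → Type*} [∀ i, NormedAddCommGroup (Hi i)]
    [∀ i, InnerProductSpace ℂ (Hi i)] [∀ i, CompleteSpace (Hi i)]
    (Λ Θ : ∀ i, H →L[ℂ] Hi i) (m : J → ℂ) (BΘ : ℝ)
    (hΘ : ∀ f : H, ∃ s : ℝ, HasSum (fun i => ‖Θ i f‖ ^ 2) s ∧ s ≤ BΘ * ‖f‖ ^ 2)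
    (M Minv : H →L[ℂ] H)
    (hM : ∀ f : H, HasSum (fun i => m i • adjoint (Λ i) (Θ i f)) (M f))
    (hinv : M * Minv = 1 ∧ Minv * M = 1) :
    ∀ f : H, ENNReal.ofReal (‖f‖ ^ 2 / (BΘ * ‖Minv‖ ^ 2)) ≤
      ∑' i, ENNReal.ofReal (‖m i‖ ^ 2 * ‖Λ i f‖ ^ 2) := by
  intro f
  rcases eq_or_ne f 0 with rfl | hf
  · simp
  have hΘ : IsGBesselSeq Θ BΘ := hΘ
  have hB : 0 ≤ BΘ := hΘ.bound_nonneg hf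
  refine ENNReal.ofReal_le_tsum_ofReal (fun i => by positivity) fun hS => ?_
  exact div_le_of_le_mul₀ (by positivity) (tsum_nonneg fun i => by positivity)
    (norm_sq_le_tsum_mul_of_multiplier hΘ hB hM hinv.1 hS)
end

section
/- Let Λ = {Λ_i} be a g-frame for H with bounds A, B, G : H → H a bounded bijective operator, Θ_i = Λ_i G, and let m = (m_i) be a positive semi-normalized sequence (0 < a ≤ m_i ≤ b for all i). Then the multiplier M_{m,Λ,Θ} f = ∑_i m_i Λ_i* Θ_i f is invertible on H, with inverse M_{m,Λ,Θ}^{-1} = G^{-1} S_{(√m_i Λ_i)}^{-1}, where S_{(√m_i Λ_i)} is the g-frame operator of the g-frame {√m_i Λ_i}. -/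
/-!
Since `√mᵢ · √mᵢ = mᵢ`, the g-frame operator `S` of `{√mᵢ Λᵢ}` is the weighted sum
`∑ mᵢ Λᵢ* Λᵢ`, so `M = S G`. For every `f`, `Re ⟪f, S f⟫ = ∑ mᵢ ‖Λᵢ f‖² ≥ a A ‖f‖²`,
and an operator coercive in this sense on a Hilbert space is invertible.
-/

open ContinuousLinearMap
local notation "⟪" x ", " y "⟫" => @inner ℂ _ _ x y

theorem sqrt_smul_map_sqrt_smul {E F L : Type*} [AddCommGroup E] [Module ℂ E] [AddCommGroup F]
    [Module ℂ F] [FunLike L E F] [LinearMapClass L ℂ E F] (T : L) {r : ℝ} (hr : 0 ≤ r) (x : E) :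
    (Real.sqrt r : ℂ) • T ((Real.sqrt r : ℂ) • x) = (r : ℂ) • T x := by
  rw [map_smul, smul_smul, ← Complex.ofReal_mul, Real.mul_self_sqrt hr]

section WeightedFrameOperator

variable {H : Type*} [NormedAddCommGroup H] [InnerProductSpace ℂ H] [CompleteSpace H]
  {J : Type*} {Hi : J → Type*} [∀ i, NormedAddCommGroup (Hi i)]
  [∀ i, InnerProductSpace ℂ (Hi i)] [∀ i, CompleteSpace (Hi i)]
  (Λ : ∀ i, H →L[ℂ] Hi i) (m : J → ℝ)

theorem hasSum_re_inner_weighted_frameOperator {f y : H}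
    (hy : HasSum (fun i => (m i : ℂ) • adjoint (Λ i) (Λ i f)) y) :
    HasSum (fun i => m i * ‖Λ i f‖ ^ 2) (⟪f, y⟫).re := by
  convert hy.mapL (Complex.reCLM.comp ((innerSL ℂ f).restrictScalars ℝ)) using 2 with i
  · simp only [ContinuousLinearMap.comp_apply, coe_restrictScalars', innerSL_apply_apply,
      Complex.reCLM_apply, inner_smul_right, adjoint_inner_right, Complex.re_ofReal_mul,
      inner_self_eq_norm_sq_to_K]
    norm_cast
  · rfl

theorem isUnit_of_hasSum_weighted_frameOperator {A a : ℝ} (hA : 0 < A) (ha : 0 < a)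
    (hlower : ∀ f : H, ∃ s : ℝ, HasSum (fun i => ‖Λ i f‖ ^ 2) s ∧ A * ‖f‖ ^ 2 ≤ s)
    (hm : ∀ i, a ≤ m i) (S : H →L[ℂ] H)
    (hS : ∀ f : H, HasSum (fun i => (m i : ℂ) • adjoint (Λ i) (Λ i f)) (S f)) :
    IsUnit S := by
  refine isUnit_of_forall_le_norm_inner_map S (c := ⟨a * A, by positivity⟩)
    (mul_pos ha hA) fun f => ?_
  obtain ⟨s, hs, hAs⟩ := hlower f
  have hweighted : a * s ≤ (⟪f, S f⟫).re :=
    hasSum_le (fun i => mul_le_mul_of_nonneg_right (hm i) (sq_nonneg _)) (hs.mul_left a)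
      (hasSum_re_inner_weighted_frameOperator Λ m (hS f))
  calc ‖f‖ ^ 2 * (a * A) = a * (A * ‖f‖ ^ 2) := by ring
    _ ≤ a * s := mul_le_mul_of_nonneg_left hAs ha.le
    _ ≤ (⟪f, S f⟫).re := hweighted
    _ ≤ ‖⟪S f, f⟫‖ := (Complex.re_le_norm _).trans_eq (norm_inner_symm _ _)

end WeightedFrameOperator

theorem stmt7_general {H : Type*} [NormedAddCommGroup H] [InnerProductSpace ℂ H] [CompleteSpace H]
    {J : Type*} {Hi : J → Type*} [∀ i, NormedAddCommGroup (Hi i)]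
    [∀ i, InnerProductSpace ℂ (Hi i)] [∀ i, CompleteSpace (Hi i)]
    (Λ : ∀ i, H →L[ℂ] Hi i) (A B : ℝ) (hA : 0 < A)
    (hframe : ∀ f : H, ∃ s : ℝ, HasSum (fun i => ‖Λ i f‖ ^ 2) s ∧
      A * ‖f‖ ^ 2 ≤ s ∧ s ≤ B * ‖f‖ ^ 2)
    (G : H →L[ℂ] H)
    (m : J → ℝ) (a b : ℝ) (ha : 0 < a) (hm : ∀ i, a ≤ m i ∧ m i ≤ b)
    (M : H →L[ℂ] H)
    (hM : ∀ f : H, HasSum (fun i => (m i : ℂ) • adjoint (Λ i) (Λ i (G f))) (M f))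
    (S : H →L[ℂ] H)
    (hS : ∀ f : H, HasSum (fun i =>
      (Real.sqrt (m i) : ℂ) • adjoint (Λ i) ((Real.sqrt (m i) : ℂ) • Λ i f)) (S f)) :
    (∃ Sinv : H →L[ℂ] H, S * Sinv = 1 ∧ Sinv * S = 1) ∧
    ∀ Ginv Sinv : H →L[ℂ] H, G * Ginv = 1 → Ginv * G = 1 → S * Sinv = 1 → Sinv * S = 1 →
      M * (Ginv * Sinv) = 1 ∧ (Ginv * Sinv) * M = 1 := by
  have hS' (f : H) : HasSum (fun i => (m i : ℂ) • adjoint (Λ i) (Λ i f)) (S f) := by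
    convert hS f using 2 with i
    exact (sqrt_smul_map_sqrt_smul (adjoint (Λ i)) (ha.le.trans (hm i).1) _).symm
  have hMS : M = S * G := ext fun f => (hM f).unique (hS' (G f))
  have hSunit : IsUnit S :=
    isUnit_of_hasSum_weighted_frameOperator Λ m hA ha
      (fun f => (hframe f).imp fun _ hs => ⟨hs.1, hs.2.1⟩) (fun i => (hm i).1) S hS'
  refine ⟨isUnit_iff_exists.mp hSunit, fun Ginv Sinv hGGinv hGinvG hSSinv hSinvS => ?_⟩
  subst hMS
  constructor
  · rw [mul_assoc, ← mul_assoc G, hGGinv, one_mul, hSSinv]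
  · rw [mul_assoc, ← mul_assoc Sinv, hSinvS, one_mul, hGinvG]

theorem stmt7 {H : Type*} [NormedAddCommGroup H] [InnerProductSpace ℂ H] [CompleteSpace H]
    {J : Type*} {Hi : J → Type*} [∀ i, NormedAddCommGroup (Hi i)]
    [∀ i, InnerProductSpace ℂ (Hi i)] [∀ i, CompleteSpace (Hi i)]
    (Λ : ∀ i, H →L[ℂ] Hi i) (A B : ℝ) (hA : 0 < A)
    (hframe : ∀ f : H, ∃ s : ℝ, HasSum (fun i => ‖Λ i f‖ ^ 2) s ∧
      A * ‖f‖ ^ 2 ≤ s ∧ s ≤ B * ‖f‖ ^ 2)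
    (G : H →L[ℂ] H) (hG : Function.Bijective G)
    (m : J → ℝ) (a b : ℝ) (ha : 0 < a) (hm : ∀ i, a ≤ m i ∧ m i ≤ b)
    (M : H →L[ℂ] H)
    (hM : ∀ f : H, HasSum (fun i => (m i : ℂ) • adjoint (Λ i) (Λ i (G f))) (M f))
    (S : H →L[ℂ] H)
    (hS : ∀ f : H, HasSum (fun i =>
      (Real.sqrt (m i) : ℂ) • adjoint (Λ i) ((Real.sqrt (m i) : ℂ) • Λ i f)) (S f)) :
    (∃ Sinv : H →L[ℂ] H, S * Sinv = 1 ∧ Sinv * S = 1) ∧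
    ∀ Ginv Sinv : H →L[ℂ] H, G * Ginv = 1 → Ginv * G = 1 → S * Sinv = 1 → Sinv * S = 1 →
      M * (Ginv * Sinv) = 1 ∧ (Ginv * Sinv) * M = 1 :=
  stmt7_general Λ A B hA hframe G m a b ha hm M hM S hS
end

section
/- Let Λ = {Λ_i} be a g-frame for H with upper bound B_Λ and Λ^d = {Λ_i^d} a dual g-frame of Λ with upper bound B_{Λ^d}. Let 0 ≤ λ < 1/√(B_Λ B_{Λ^d}) and let m = (m_i) satisfy 1 − λ ≤ m_i ≤ 1 + λ for all i. Then M_{m,Λ,Λ^d} is invertible on H and ‖h‖/(1 + λ√(B_Λ B_{Λ^d})) ≤ ‖M_{m,Λ,Λ^d}^{-1} h‖ ≤ ‖h‖/(1 − λ√(B_Λ B_{Λ^d})) for all h ∈ H. -/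
/-!
By duality, `1 - M = ∑ (1 - m_i) Λ_i* Λ_i^d`. Pairing with `g` and applying Cauchy–Schwarz to
`∑ ‖Λ_i g‖ ‖Λ_i^d f‖` together with the two Bessel bounds gives
`‖1 - M‖ ≤ λ √(B_Λ B_{Λ^d}) =: r < 1`. A Neumann series then inverts `M`, and
`(1 - r) ‖x‖ ≤ ‖M x‖ ≤ (1 + r) ‖x‖` yields the bounds on `M⁻¹`.
-/

open ContinuousLinearMap
local notation "⟪" x ", " y "⟫" => @inner ℂ _ _ x y

open scoped InnerProductSpace

theorem Real.sqrt_mul_sqrt_le (a b : ℝ) : √a * √b ≤ √(a * b) := by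
  rcases le_or_gt 0 a with ha | ha
  · rw [Real.sqrt_mul ha]
  · rw [Real.sqrt_eq_zero'.2 ha.le, zero_mul]
    exact Real.sqrt_nonneg _

section Perturbation

variable {𝕜 E : Type*} [NontriviallyNormedField 𝕜] [NormedAddCommGroup E] [NormedSpace 𝕜 E]
  {M : E →L[𝕜] E} {r : ℝ}

theorem norm_apply_bounds_of_norm_one_sub_le (hM : ‖1 - M‖ ≤ r) (x : E) :
    (1 - r) * ‖x‖ ≤ ‖M x‖ ∧ ‖M x‖ ≤ (1 + r) * ‖x‖ := by
  have hx : ‖x - M x‖ ≤ r * ‖x‖ := by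
    simpa using ((1 - M).le_opNorm x).trans (mul_le_mul_of_nonneg_right hM (norm_nonneg x))
  rw [← sub_sub_cancel x (M x)]
  constructor
  · linarith [norm_sub_norm_le x (x - M x)]
  · linarith [norm_sub_le x (x - M x)]

theorem exists_inverse_of_norm_one_sub_le [CompleteSpace E] (hM : ‖1 - M‖ ≤ r) (hr : r < 1) :
    ∃ Minv : E →L[𝕜] E, M * Minv = 1 ∧ Minv * M = 1 ∧
      ∀ h : E, ‖h‖ / (1 + r) ≤ ‖Minv h‖ ∧ ‖Minv h‖ ≤ ‖h‖ / (1 - r) := by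
  let u := Units.oneSub (1 - M) (hM.trans_lt hr)
  have hu : (u : E →L[𝕜] E) = M := by simp [u]
  have hr0 : 0 ≤ r := (norm_nonneg _).trans hM
  refine ⟨↑u⁻¹, hu ▸ u.mul_inv, hu ▸ u.inv_mul, fun h => ?_⟩
  have hMx : M ((↑u⁻¹ : E →L[𝕜] E) h) = h := by
    change (M * ↑u⁻¹) h = h
    rw [← hu, u.mul_inv]
    rfl
  obtain ⟨hlow, hup⟩ := norm_apply_bounds_of_norm_one_sub_le hM ((↑u⁻¹ : E →L[𝕜] E) h)
  rw [hMx] at hlow hup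
  rw [div_le_iff₀ (by linarith), le_div_iff₀ (by linarith)]
  constructor <;> linarith

end Perturbation

section GBessel

variable {𝕜 : Type*} [RCLike 𝕜] {H : Type*} [NormedAddCommGroup H] [InnerProductSpace 𝕜 H]
  {J : Type*} {Hi : J → Type*} [∀ i, NormedAddCommGroup (Hi i)] [∀ i, InnerProductSpace 𝕜 (Hi i)]

def IsGBessel (Λ : ∀ i, H →L[𝕜] Hi i) (B : ℝ) : Prop :=
  ∀ f : H, ∃ s : ℝ, HasSum (fun i => ‖Λ i f‖ ^ 2) s ∧ s ≤ B * ‖f‖ ^ 2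

namespace IsGBessel

variable {Λ Γ : ∀ i, H →L[𝕜] Hi i} {B B' : ℝ}

theorem sum_sq_le (hΛ : IsGBessel Λ B) (f : H) (s : Finset J) :
    ∑ i ∈ s, ‖Λ i f‖ ^ 2 ≤ B * ‖f‖ ^ 2 := by
  obtain ⟨t, ht, htB⟩ := hΛ f
  exact (sum_le_hasSum s (fun i _ => by positivity) ht).trans htB

theorem sum_mul_le (hΛ : IsGBessel Λ B) (hΓ : IsGBessel Γ B') (g f : H) (s : Finset J) :
    ∑ i ∈ s, ‖Λ i g‖ * ‖Γ i f‖ ≤ √B * √B' * (‖g‖ * ‖f‖) :=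
  calc ∑ i ∈ s, ‖Λ i g‖ * ‖Γ i f‖
      ≤ √(∑ i ∈ s, ‖Λ i g‖ ^ 2) * √(∑ i ∈ s, ‖Γ i f‖ ^ 2) := Real.sum_mul_le_sqrt_mul_sqrt s _ _
    _ ≤ √(B * ‖g‖ ^ 2) * √(B' * ‖f‖ ^ 2) := by
      gcongr
      · exact hΛ.sum_sq_le g s
      · exact hΓ.sum_sq_le f s
    _ = √B * √B' * (‖g‖ * ‖f‖) := by
      rw [Real.sqrt_mul' _ (sq_nonneg _), Real.sqrt_mul' _ (sq_nonneg _),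
        Real.sqrt_sq (norm_nonneg _), Real.sqrt_sq (norm_nonneg _)]
      ring

variable [CompleteSpace H] [∀ i, CompleteSpace (Hi i)] {c : J → 𝕜} {lam : ℝ} {f x : H}

theorem norm_inner_le_of_hasSum (hΛ : IsGBessel Λ B) (hΓ : IsGBessel Γ B') (hlam : 0 ≤ lam)
    (hc : ∀ i, ‖c i‖ ≤ lam) (hx : HasSum (fun i => c i • adjoint (Λ i) (Γ i f)) x) (g : H) :
    ‖⟪g, x⟫_𝕜‖ ≤ lam * (√B * √B') * (‖g‖ * ‖f‖) := by
  have hg : HasSum (fun i => ⟪g, c i • adjoint (Λ i) (Γ i f)⟫_𝕜) ⟪g, x⟫_𝕜 :=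
    (innerSL 𝕜 g).hasSum hx
  refine le_of_tendsto' ((continuous_norm.tendsto _).comp hg) fun s => ?_
  calc ‖∑ i ∈ s, ⟪g, c i • adjoint (Λ i) (Γ i f)⟫_𝕜‖
      ≤ ∑ i ∈ s, lam * (‖Λ i g‖ * ‖Γ i f‖) := by
        refine (norm_sum_le _ _).trans (Finset.sum_le_sum fun i _ => ?_)
        rw [inner_smul_right, adjoint_inner_right, norm_mul]
        exact mul_le_mul (hc i) (norm_inner_le_norm _ _) (norm_nonneg _) hlam
    _ ≤ lam * (√B * √B' * (‖g‖ * ‖f‖)) := by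
        rw [← Finset.mul_sum]
        exact mul_le_mul_of_nonneg_left (hΛ.sum_mul_le hΓ g f s) hlam
    _ = lam * (√B * √B') * (‖g‖ * ‖f‖) := by ring

theorem norm_le_of_hasSum (hΛ : IsGBessel Λ B) (hΓ : IsGBessel Γ B') (hlam : 0 ≤ lam)
    (hc : ∀ i, ‖c i‖ ≤ lam) (hx : HasSum (fun i => c i • adjoint (Λ i) (Γ i f)) x) :
    ‖x‖ ≤ lam * (√B * √B') * ‖f‖ := by
  have h := hΛ.norm_inner_le_of_hasSum hΓ hlam hc hx x
  rw [inner_self_eq_norm_sq_to_K, norm_pow, RCLike.norm_ofReal, abs_norm] at h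
  rcases (norm_nonneg x).eq_or_lt with h0 | hpos
  · rw [← h0]
    positivity
  · nlinarith

theorem norm_one_sub_multiplier_le (hΛ : IsGBessel Λ B) (hΓ : IsGBessel Γ B')
    (hdual : ∀ f : H, HasSum (fun i => adjoint (Λ i) (Γ i f)) f) {m : J → 𝕜} (hlam : 0 ≤ lam)
    (hm : ∀ i, ‖1 - m i‖ ≤ lam) {M : H →L[𝕜] H}
    (hM : ∀ f : H, HasSum (fun i => m i • adjoint (Λ i) (Γ i f)) (M f)) :
    ‖1 - M‖ ≤ lam * (√B * √B') :=
  opNorm_le_bound _ (by positivity) fun f => hΛ.norm_le_of_hasSum hΓ hlam hm <| by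
    simpa [sub_smul] using (hdual f).sub (hM f)

end IsGBessel

end GBessel

theorem stmt8_general {H : Type*} [NormedAddCommGroup H] [InnerProductSpace ℂ H] [CompleteSpace H]
    {J : Type*} {Hi : J → Type*} [∀ i, NormedAddCommGroup (Hi i)]
    [∀ i, InnerProductSpace ℂ (Hi i)] [∀ i, CompleteSpace (Hi i)]
    (Λ Λd : ∀ i, H →L[ℂ] Hi i) (AΛ BΛ AΛd BΛd : ℝ)
    (hΛ : ∀ f : H, ∃ s : ℝ, HasSum (fun i => ‖Λ i f‖ ^ 2) s ∧
      AΛ * ‖f‖ ^ 2 ≤ s ∧ s ≤ BΛ * ‖f‖ ^ 2)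
    (hΛd : ∀ f : H, ∃ s : ℝ, HasSum (fun i => ‖Λd i f‖ ^ 2) s ∧
      AΛd * ‖f‖ ^ 2 ≤ s ∧ s ≤ BΛd * ‖f‖ ^ 2)
    (hdual : ∀ f : H, HasSum (fun i => adjoint (Λ i) (Λd i f)) f)
    (lam : ℝ) (hlam0 : 0 ≤ lam) (hlam : lam < 1 / Real.sqrt (BΛ * BΛd))
    (m : J → ℝ) (hm : ∀ i, 1 - lam ≤ m i ∧ m i ≤ 1 + lam)
    (M : H →L[ℂ] H)
    (hM : ∀ f : H, HasSum (fun i => (m i : ℂ) • adjoint (Λ i) (Λd i f)) (M f)) :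
    ∃ Minv : H →L[ℂ] H, M * Minv = 1 ∧ Minv * M = 1 ∧
      ∀ h : H, ‖h‖ / (1 + lam * Real.sqrt (BΛ * BΛd)) ≤ ‖Minv h‖ ∧
        ‖Minv h‖ ≤ ‖h‖ / (1 - lam * Real.sqrt (BΛ * BΛd)) := by
  have hΛB : IsGBessel Λ BΛ := fun f => (hΛ f).imp fun _ hs => ⟨hs.1, hs.2.2⟩
  have hΛdB : IsGBessel Λd BΛd := fun f => (hΛd f).imp fun _ hs => ⟨hs.1, hs.2.2⟩
  have hm' : ∀ i, ‖1 - (m i : ℂ)‖ ≤ lam := fun i => by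
    rw [← Complex.ofReal_one, ← Complex.ofReal_sub, Complex.norm_real, Real.norm_eq_abs, abs_le]
    constructor <;> linarith [hm i]
  have hsqrt : 0 < √(BΛ * BΛd) := (Real.sqrt_nonneg _).lt_of_ne fun h => by
    rw [← h, div_zero] at hlam
    linarith
  refine exists_inverse_of_norm_one_sub_le ?_ ((lt_div_iff₀ hsqrt).1 hlam)
  calc ‖1 - M‖ ≤ lam * (√BΛ * √BΛd) := hΛB.norm_one_sub_multiplier_le hΛdB hdual hlam0 hm' hM
    _ ≤ lam * √(BΛ * BΛd) := mul_le_mul_of_nonneg_left (Real.sqrt_mul_sqrt_le _ _) hlam0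

theorem stmt8 {H : Type*} [NormedAddCommGroup H] [InnerProductSpace ℂ H] [CompleteSpace H]
    {J : Type*} {Hi : J → Type*} [∀ i, NormedAddCommGroup (Hi i)]
    [∀ i, InnerProductSpace ℂ (Hi i)] [∀ i, CompleteSpace (Hi i)]
    (Λ Λd : ∀ i, H →L[ℂ] Hi i) (AΛ BΛ AΛd BΛd : ℝ) (hAΛ : 0 < AΛ) (hAΛd : 0 < AΛd)
    (hΛ : ∀ f : H, ∃ s : ℝ, HasSum (fun i => ‖Λ i f‖ ^ 2) s ∧
      AΛ * ‖f‖ ^ 2 ≤ s ∧ s ≤ BΛ * ‖f‖ ^ 2)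
    (hΛd : ∀ f : H, ∃ s : ℝ, HasSum (fun i => ‖Λd i f‖ ^ 2) s ∧
      AΛd * ‖f‖ ^ 2 ≤ s ∧ s ≤ BΛd * ‖f‖ ^ 2)
    (hdual : ∀ f : H, HasSum (fun i => adjoint (Λ i) (Λd i f)) f)
    (lam : ℝ) (hlam0 : 0 ≤ lam) (hlam : lam < 1 / Real.sqrt (BΛ * BΛd))
    (m : J → ℝ) (hm : ∀ i, 1 - lam ≤ m i ∧ m i ≤ 1 + lam)
    (M : H →L[ℂ] H)
    (hM : ∀ f : H, HasSum (fun i => (m i : ℂ) • adjoint (Λ i) (Λd i f)) (M f)) :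
    ∃ Minv : H →L[ℂ] H, M * Minv = 1 ∧ Minv * M = 1 ∧
      ∀ h : H, ‖h‖ / (1 + lam * Real.sqrt (BΛ * BΛd)) ≤ ‖Minv h‖ ∧
        ‖Minv h‖ ≤ ‖h‖ / (1 - lam * Real.sqrt (BΛ * BΛd)) :=
  stmt8_general Λ Λd AΛ BΛ AΛd BΛd hΛ hΛd hdual lam hlam0 hlam m hm M hM
end

section
/- Let Λ be a g-frame for H with bounds A_Λ, B_Λ and canonical dual ~Λ = {Λ_i S^{-1}} where S is the g-frame operator. Let 0 ≤ λ < √(A_Λ/B_Λ) and (m_i) satisfy 1 − λ ≤ m_i ≤ 1 + λ for all i. Then M_{m,Λ,~Λ} is invertible on H and ‖h‖/(1 + λ√(B_Λ/A_Λ)) ≤ ‖M_{m,Λ,~Λ}^{-1} h‖ ≤ ‖h‖/(1 − λ√(B_Λ/A_Λ)) for all h ∈ H. -/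
open ContinuousLinearMap
local notation "⟪" x ", " y "⟫" => @inner ℂ _ _ x y

/-!
Put `β = λ √(B/A) < 1`. It suffices that `‖M f - f‖ ≤ β ‖f‖` for all `f`: then `‖1 - M‖ < 1`, so
`M` is invertible by the Neumann series, and the triangle inequality applied to
`‖M y - y‖ ≤ β ‖y‖` at `y = M⁻¹ h` gives both bounds.

For the estimate let `y = S⁻¹ f` and `x = M f - f = ∑ (mᵢ - 1) Λᵢ* Λᵢ y`. Then
`‖x‖² = ∑ (mᵢ - 1) ⟪Λᵢ x, Λᵢ y⟫ ≤ λ (∑ ‖Λᵢ x‖²)^½ (∑ ‖Λᵢ y‖²)^½` by Cauchy–Schwarz; the upper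
frame bound gives `∑ ‖Λᵢ x‖² ≤ B ‖x‖²`, and `∑ ‖Λᵢ y‖² = re ⟪y, f⟫ ≤ ‖f‖² / A` because the
lower frame bound makes `‖S y‖ ≥ A ‖y‖`.
-/

section Perturbation

variable {𝕜 E : Type*} [NontriviallyNormedField 𝕜] [NormedAddCommGroup E] [NormedSpace 𝕜 E]
  {T : E →L[𝕜] E} {β : ℝ}

theorem ContinuousLinearMap.isUnit_of_norm_apply_sub_self_le [CompleteSpace E] (hβ0 : 0 ≤ β)
    (hβ : β < 1) (hT : ∀ f, ‖T f - f‖ ≤ β * ‖f‖) : IsUnit T := by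
  have hnorm : ‖1 - T‖ < 1 := by
    refine lt_of_le_of_lt (opNorm_le_bound _ hβ0 fun f => ?_) hβ
    rw [sub_apply, one_apply_eq_self, norm_sub_rev]
    exact hT f
  simpa only [sub_sub_cancel] using isUnit_one_sub_of_norm_lt_one hnorm

theorem ContinuousLinearMap.norm_div_one_add_le_and_le_norm_div_one_sub {y : E} (hβ0 : 0 ≤ β)
    (hβ : β < 1) (hy : ‖T y - y‖ ≤ β * ‖y‖) :
    ‖T y‖ / (1 + β) ≤ ‖y‖ ∧ ‖y‖ ≤ ‖T y‖ / (1 - β) := by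
  have hupper : ‖T y‖ ≤ ‖y‖ + ‖T y - y‖ := norm_le_insert' _ _
  have hlower : ‖y‖ ≤ ‖T y‖ + ‖T y - y‖ := norm_le_insert _ _
  constructor
  · rw [div_le_iff₀ (by linarith)]
    linarith
  · rw [le_div_iff₀ (by linarith)]
    linarith

theorem ContinuousLinearMap.exists_inverse_of_norm_apply_sub_self_le [CompleteSpace E]
    (hβ0 : 0 ≤ β) (hβ : β < 1) (hT : ∀ f, ‖T f - f‖ ≤ β * ‖f‖) :
    ∃ Tinv : E →L[𝕜] E, T * Tinv = 1 ∧ Tinv * T = 1 ∧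
      ∀ h, ‖h‖ / (1 + β) ≤ ‖Tinv h‖ ∧ ‖Tinv h‖ ≤ ‖h‖ / (1 - β) := by
  obtain ⟨u, rfl⟩ := isUnit_of_norm_apply_sub_self_le hβ0 hβ hT
  refine ⟨↑u⁻¹, u.mul_inv, u.inv_mul, fun h => ?_⟩
  have hh : (u : E →L[𝕜] E) ((↑u⁻¹ : E →L[𝕜] E) h) = h := by
    rw [← mul_apply_eq_comp, u.mul_inv, one_apply_eq_self]
  simpa only [hh] using
    norm_div_one_add_le_and_le_norm_div_one_sub hβ0 hβ (hT ((↑u⁻¹ : E →L[𝕜] E) h))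

end Perturbation

theorem HasSum.exists_hasSum_mul_le_sqrt_mul_sqrt {J : Type*} {u v : J → ℝ} {U V : ℝ}
    (hu0 : ∀ i, 0 ≤ u i) (hv0 : ∀ i, 0 ≤ v i)
    (hu : HasSum (fun i => u i ^ 2) U) (hv : HasSum (fun i => v i ^ 2) V) :
    ∃ W, HasSum (fun i => u i * v i) W ∧ W ≤ √U * √V := by
  have hU : 0 ≤ U := hu.nonneg fun i => sq_nonneg _
  have hV : 0 ≤ V := hv.nonneg fun i => sq_nonneg _
  have rpow_two (x : ℝ) : x ^ (2 : ℝ) = x ^ 2 := Real.rpow_two x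
  obtain ⟨W, -, hW, hsum⟩ := Real.inner_le_Lp_mul_Lq_hasSum_of_nonneg
    Real.HolderConjugate.two_two (Real.sqrt_nonneg U) (Real.sqrt_nonneg V) hu0 hv0
    (by simpa only [rpow_two, Real.sq_sqrt hU] using hu)
    (by simpa only [rpow_two, Real.sq_sqrt hV] using hv)
  exact ⟨W, hsum, hW⟩

section GFrame

variable {H : Type*} [NormedAddCommGroup H] [InnerProductSpace ℂ H] [CompleteSpace H]
  {J : Type*} {Hi : J → Type*} [∀ i, NormedAddCommGroup (Hi i)]
  [∀ i, InnerProductSpace ℂ (Hi i)] [∀ i, CompleteSpace (Hi i)]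

def IsGFrame (Λ : ∀ i, H →L[ℂ] Hi i) (A B : ℝ) : Prop :=
  ∀ f : H, ∃ s : ℝ, HasSum (fun i => ‖Λ i f‖ ^ 2) s ∧ A * ‖f‖ ^ 2 ≤ s ∧ s ≤ B * ‖f‖ ^ 2

theorem HasSum.inner_of_adjoint {T : ∀ i, H →L[ℂ] Hi i} {y : ∀ i, Hi i} {g : H}
    (hg : HasSum (fun i => adjoint (T i) (y i)) g) (x : H) :
    HasSum (fun i => ⟪T i x, y i⟫) ⟪x, g⟫ := by
  simpa only [innerSL_apply_apply, adjoint_inner_right] using (innerSL ℂ x).hasSum hg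

variable {Λ : ∀ i, H →L[ℂ] Hi i}

theorem HasSum.le_norm_mul_norm_of_adjoint {y g : H} {s : ℝ}
    (hg : HasSum (fun i => adjoint (Λ i) (Λ i y)) g) (hs : HasSum (fun i => ‖Λ i y‖ ^ 2) s) :
    s ≤ ‖y‖ * ‖g‖ := by
  have hre : HasSum (fun i => ‖Λ i y‖ ^ 2) (RCLike.re ⟪y, g⟫) := by
    simpa only [RCLike.reCLM_apply, inner_self_eq_norm_sq] using
      RCLike.reCLM.hasSum (hg.inner_of_adjoint y)
  exact hs.unique hre ▸ re_inner_le_norm y g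

theorem HasSum.le_norm_sq_div_of_adjoint {A s : ℝ} (hA : 0 < A) {y f : H}
    (hf : HasSum (fun i => adjoint (Λ i) (Λ i y)) f) (hs : HasSum (fun i => ‖Λ i y‖ ^ 2) s)
    (hAs : A * ‖y‖ ^ 2 ≤ s) :
    s ≤ ‖f‖ ^ 2 / A := by
  have hsy : s ≤ ‖y‖ * ‖f‖ := hf.le_norm_mul_norm_of_adjoint hs
  have hy : A * ‖y‖ ≤ ‖f‖ := by
    rcases (norm_nonneg y).eq_or_lt with hy0 | hy0
    · rw [← hy0, mul_zero]; exact norm_nonneg f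
    · exact le_of_mul_le_mul_right (by nlinarith) hy0
  rw [le_div_iff₀ hA]
  nlinarith [norm_nonneg f]

theorem IsGFrame.norm_sub_le_of_hasSum_smul_adjoint {A B : ℝ} (hΛ : IsGFrame Λ A B)
    (hA : 0 < A) {lam : ℝ} (hlam : 0 ≤ lam) {m : J → ℝ} (hm : ∀ i, |m i - 1| ≤ lam)
    {y f g : H} (hf : HasSum (fun i => adjoint (Λ i) (Λ i y)) f)
    (hg : HasSum (fun i => (m i : ℂ) • adjoint (Λ i) (Λ i y)) g) :
    ‖g - f‖ ≤ lam * √(B / A) * ‖f‖ := by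
  set x := g - f
  have hx : HasSum (fun i => adjoint (Λ i) (((m i : ℂ) - 1) • Λ i y)) x := by
    simpa only [sub_smul, one_smul, map_sub, map_smul] using hg.sub hf
  obtain ⟨U, hU, -, hUB⟩ := hΛ x
  obtain ⟨V, hV, hAV, -⟩ := hΛ y
  have hVf : V ≤ ‖f‖ ^ 2 / A := hf.le_norm_sq_div_of_adjoint hA hV hAV
  obtain ⟨W, hW, hWUV⟩ :=
    hU.exists_hasSum_mul_le_sqrt_mul_sqrt (fun i => norm_nonneg _) (fun i => norm_nonneg _) hV
  have hterm (i : J) : ‖⟪Λ i x, ((m i : ℂ) - 1) • Λ i y⟫‖ ≤ lam * (‖Λ i x‖ * ‖Λ i y‖) := by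
    rw [inner_smul_right, norm_mul, ← Complex.ofReal_one, ← Complex.ofReal_sub,
      Complex.norm_real, Real.norm_eq_abs]
    exact mul_le_mul (hm i) (norm_inner_le_norm _ _) (norm_nonneg _) hlam
  have hxW : ‖x‖ ^ 2 ≤ lam * W := by
    have := (hx.inner_of_adjoint x).norm_le_of_bounded (hW.mul_left lam) hterm
    simpa only [inner_self_eq_norm_sq_to_K, norm_pow, RCLike.norm_ofReal, abs_norm] using this
  have hUV : √U * √V ≤ √(B / A) * (‖x‖ * ‖f‖) := by
    have hU0 : 0 ≤ U := hU.nonneg fun i => sq_nonneg _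
    have hV0 : 0 ≤ V := hV.nonneg fun i => sq_nonneg _
    rw [← Real.sqrt_mul hU0, ← Real.sqrt_sq (by positivity : 0 ≤ ‖x‖ * ‖f‖),
      ← Real.sqrt_mul' _ (sq_nonneg _)]
    refine Real.sqrt_le_sqrt ?_
    calc U * V ≤ B * ‖x‖ ^ 2 * (‖f‖ ^ 2 / A) := mul_le_mul hUB hVf hV0 (hU0.trans hUB)
      _ = B / A * (‖x‖ * ‖f‖) ^ 2 := by ring
  have hx2 : ‖x‖ * ‖x‖ ≤ lam * √(B / A) * ‖f‖ * ‖x‖ := by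
    calc ‖x‖ * ‖x‖ = ‖x‖ ^ 2 := (sq _).symm
      _ ≤ lam * (√(B / A) * (‖x‖ * ‖f‖)) :=
        hxW.trans (mul_le_mul_of_nonneg_left (hWUV.trans hUV) hlam)
      _ = lam * √(B / A) * ‖f‖ * ‖x‖ := by ring
  rcases (norm_nonneg x).eq_or_lt with hx0 | hx0
  · rw [← hx0]; positivity
  · exact le_of_mul_le_mul_right hx2 hx0

end GFrame

theorem stmt9 {H : Type*} [NormedAddCommGroup H] [InnerProductSpace ℂ H] [CompleteSpace H]
    {J : Type*} {Hi : J → Type*} [∀ i, NormedAddCommGroup (Hi i)]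
    [∀ i, InnerProductSpace ℂ (Hi i)] [∀ i, CompleteSpace (Hi i)]
    (Λ : ∀ i, H →L[ℂ] Hi i) (AΛ BΛ : ℝ) (hAΛ : 0 < AΛ)
    (hΛ : ∀ f : H, ∃ s : ℝ, HasSum (fun i => ‖Λ i f‖ ^ 2) s ∧
      AΛ * ‖f‖ ^ 2 ≤ s ∧ s ≤ BΛ * ‖f‖ ^ 2)
    (S Sinv : H →L[ℂ] H)
    (hS : ∀ f : H, HasSum (fun i => adjoint (Λ i) (Λ i f)) (S f))
    (hSinv : S * Sinv = 1 ∧ Sinv * S = 1)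
    (lam : ℝ) (hlam0 : 0 ≤ lam) (hlam : lam < Real.sqrt (AΛ / BΛ))
    (m : J → ℝ) (hm : ∀ i, 1 - lam ≤ m i ∧ m i ≤ 1 + lam)
    (M : H →L[ℂ] H)
    (hM : ∀ f : H, HasSum (fun i => (m i : ℂ) • adjoint (Λ i) (Λ i (Sinv f))) (M f)) :
    ∃ Minv : H →L[ℂ] H, M * Minv = 1 ∧ Minv * M = 1 ∧
      ∀ h : H, ‖h‖ / (1 + lam * Real.sqrt (BΛ / AΛ)) ≤ ‖Minv h‖ ∧
        ‖Minv h‖ ≤ ‖h‖ / (1 - lam * Real.sqrt (BΛ / AΛ)) := by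
  have hBΛ : 0 < BΛ := by
    by_contra! hB
    rw [Real.sqrt_eq_zero'.2 (div_nonpos_of_nonneg_of_nonpos hAΛ.le hB)] at hlam
    linarith
  have hβ : lam * √(BΛ / AΛ) < 1 :=
    calc lam * √(BΛ / AΛ) < √(AΛ / BΛ) * √(BΛ / AΛ) :=
          mul_lt_mul_of_pos_right hlam (by positivity)
      _ = 1 := by
          rw [← Real.sqrt_mul (by positivity), Real.sqrt_eq_one]
          field_simp
  refine exists_inverse_of_norm_apply_sub_self_le (by positivity) hβ fun f => ?_
  have hSSinv : S (Sinv f) = f := by rw [← mul_apply_eq_comp, hSinv.1, one_apply_eq_self]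
  have hf := hS (Sinv f)
  rw [hSSinv] at hf
  have hm' (i : J) : |m i - 1| ≤ lam := abs_le.2 ⟨by linarith [hm i], by linarith [hm i]⟩
  exact IsGFrame.norm_sub_le_of_hasSum_smul_adjoint hΛ hAΛ hlam0 hm' hf (hM f)
end

section
/- Let Λ be a g-frame for H with bounds A_Λ, B_Λ, and let Θ = {Θ_i} be such that Θ − Λ = {Θ_i − Λ_i} is a g-Bessel sequence with bound B_{Θ−Λ} < A_Λ²/B_Λ. Then Θ is a g-frame for H. -/
open ContinuousLinearMap
local notation "⟪" x ", " y "⟫" => @inner ℂ _ _ x y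

lemma minkowski_aux {J : Type*} {a b : J → ℝ} (ha : ∀ i, 0 ≤ a i) (hb : ∀ i, 0 ≤ b i)
    {sa sb : ℝ} (hsa : HasSum (fun i => a i ^ 2) sa) (hsb : HasSum (fun i => b i ^ 2) sb) :
    Summable (fun i => (a i + b i) ^ 2) ∧
      ∑' i, (a i + b i) ^ 2 ≤ (Real.sqrt sa + Real.sqrt sb) ^ 2 := by
  have hsum2 : Summable (fun i => 2 * a i ^ 2 + 2 * b i ^ 2) :=
    (hsa.summable.mul_left 2).add (hsb.summable.mul_left 2)
  have hsum : Summable (fun i => (a i + b i) ^ 2) :=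
    Summable.of_nonneg_of_le (fun i => sq_nonneg _)
      (fun i => by nlinarith [sq_nonneg (a i - b i)]) hsum2
  have hsa0 : 0 ≤ sa := hsa.nonneg (fun i => sq_nonneg _)
  have hsb0 : 0 ≤ sb := hsb.nonneg (fun i => sq_nonneg _)
  refine ⟨hsum, Summable.tsum_le_of_sum_le hsum ?_⟩
  intro F
  have h1 : ∑ i ∈ F, a i ^ 2 ≤ sa := sum_le_hasSum F (fun i _ => sq_nonneg _) hsa
  have h2 : ∑ i ∈ F, b i ^ 2 ≤ sb := sum_le_hasSum F (fun i _ => sq_nonneg _) hsb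
  have hcs : (∑ i ∈ F, a i * b i) ^ 2 ≤ (∑ i ∈ F, a i ^ 2) * ∑ i ∈ F, b i ^ 2 :=
    Finset.sum_mul_sq_le_sq_mul_sq F a b
  have hab0 : 0 ≤ ∑ i ∈ F, a i * b i :=
    Finset.sum_nonneg fun i _ => mul_nonneg (ha i) (hb i)
  have hA0 : 0 ≤ ∑ i ∈ F, a i ^ 2 := Finset.sum_nonneg fun i _ => sq_nonneg _
  have hB0 : 0 ≤ ∑ i ∈ F, b i ^ 2 := Finset.sum_nonneg fun i _ => sq_nonneg _
  have hab : ∑ i ∈ F, a i * b i ≤ Real.sqrt sa * Real.sqrt sb := by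
    have h3 : (∑ i ∈ F, a i * b i) ^ 2 ≤ sa * sb := by
      calc (∑ i ∈ F, a i * b i) ^ 2 ≤ (∑ i ∈ F, a i ^ 2) * ∑ i ∈ F, b i ^ 2 := hcs
        _ ≤ sa * sb := by nlinarith
    have := Real.sqrt_le_sqrt h3
    rwa [Real.sqrt_sq hab0, Real.sqrt_mul hsa0] at this
  have hexp : ∑ i ∈ F, (a i + b i) ^ 2
      = ∑ i ∈ F, a i ^ 2 + 2 * ∑ i ∈ F, a i * b i + ∑ i ∈ F, b i ^ 2 := by
    rw [Finset.mul_sum, ← Finset.sum_add_distrib, ← Finset.sum_add_distrib]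
    exact Finset.sum_congr rfl fun i _ => by ring
  have hqa : Real.sqrt sa ^ 2 = sa := Real.sq_sqrt hsa0
  have hqb : Real.sqrt sb ^ 2 = sb := Real.sq_sqrt hsb0
  nlinarith [Real.sqrt_nonneg sa, Real.sqrt_nonneg sb]

theorem stmt10 {H : Type*} [NormedAddCommGroup H] [InnerProductSpace ℂ H] [CompleteSpace H]
    {J : Type*} {Hi : J → Type*} [∀ i, NormedAddCommGroup (Hi i)]
    [∀ i, InnerProductSpace ℂ (Hi i)] [∀ i, CompleteSpace (Hi i)]
    (Λ Θ : ∀ i, H →L[ℂ] Hi i) (AΛ BΛ BΘΛ : ℝ) (hAΛ : 0 < AΛ)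
    (hΛ : ∀ f : H, ∃ s : ℝ, HasSum (fun i => ‖Λ i f‖ ^ 2) s ∧
      AΛ * ‖f‖ ^ 2 ≤ s ∧ s ≤ BΛ * ‖f‖ ^ 2)
    (hdiff : ∀ f : H, ∃ s : ℝ, HasSum (fun i => ‖(Θ i - Λ i) f‖ ^ 2) s ∧ s ≤ BΘΛ * ‖f‖ ^ 2)
    (hB : BΘΛ < AΛ ^ 2 / BΛ) :
    ∃ A B : ℝ, 0 < A ∧ ∀ f : H, ∃ s : ℝ, HasSum (fun i => ‖Θ i f‖ ^ 2) s ∧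
      A * ‖f‖ ^ 2 ≤ s ∧ s ≤ B * ‖f‖ ^ 2 := by
  rcases subsingleton_or_nontrivial H with hH | hH
  · refine ⟨1, 1, one_pos, fun f => ⟨0, ?_, ?_, ?_⟩⟩
    · have hf : f = 0 := Subsingleton.elim _ _
      simpa [hf] using (hasSum_zero : HasSum (fun _ : J => (0 : ℝ)) 0)
    · have hf : f = 0 := Subsingleton.elim _ _
      simp [hf]
    · have hf : f = 0 := Subsingleton.elim _ _
      simp [hf]
  · -- nontrivial case
    obtain ⟨f0, hf0⟩ := exists_ne (0 : H)
    have hf0n : 0 < ‖f0‖ ^ 2 := pow_pos (norm_pos_iff.mpr hf0) 2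
    obtain ⟨s0, hs0, h0lo, h0hi⟩ := hΛ f0
    have hAB : AΛ ≤ BΛ := by
      have := h0lo.trans h0hi
      exact le_of_mul_le_mul_right (by linarith [mul_le_mul_of_nonneg_right (le_refl AΛ) hf0n.le]) hf0n
    have hBΛ : 0 < BΛ := lt_of_lt_of_le hAΛ hAB
    obtain ⟨d0, hd0, hd0hi⟩ := hdiff f0
    have hd00 : 0 ≤ d0 := hd0.nonneg fun i => sq_nonneg _
    have hBΘΛ0 : 0 ≤ BΘΛ := by
      by_contra h
      push_neg at h
      nlinarith
    have hBA : BΘΛ < AΛ := by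
      rw [div_eq_mul_inv] at hB
      have h1 : BΘΛ * BΛ < AΛ ^ 2 := by
        have := (lt_div_iff₀ hBΛ).mp (by rwa [div_eq_mul_inv])
        linarith
      nlinarith
    have hsq : Real.sqrt BΘΛ < Real.sqrt AΛ := Real.sqrt_lt_sqrt hBΘΛ0 hBA
    refine ⟨(Real.sqrt AΛ - Real.sqrt BΘΛ) ^ 2, (Real.sqrt BΛ + Real.sqrt BΘΛ) ^ 2,
      pow_pos (sub_pos.mpr hsq) 2, fun f => ?_⟩
    obtain ⟨sΛ, hsΛ, hlo, hhi⟩ := hΛ f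
    obtain ⟨sd, hsd, hdhi⟩ := hdiff f
    have hsΛ0 : 0 ≤ sΛ := hsΛ.nonneg fun i => sq_nonneg _
    have hsd0 : 0 ≤ sd := hsd.nonneg fun i => sq_nonneg _
    set a : J → ℝ := fun i => ‖Λ i f‖ with ha_def
    set b : J → ℝ := fun i => ‖(Θ i - Λ i) f‖ with hb_def
    have hmink := minkowski_aux (fun i => norm_nonneg _) (fun i => norm_nonneg _) hsΛ hsd
    have hΘle : ∀ i, ‖Θ i f‖ ≤ a i + b i := by
      intro i
      have : Θ i f = Λ i f + (Θ i - Λ i) f := by simp [sub_apply]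
      rw [this]; exact norm_add_le _ _
    have hΘsum : Summable (fun i => ‖Θ i f‖ ^ 2) := by
      apply Summable.of_nonneg_of_le (fun i => sq_nonneg _) (fun i => ?_) hmink.1
      exact pow_le_pow_left₀ (norm_nonneg _) (hΘle i) 2
    set s : ℝ := ∑' i, ‖Θ i f‖ ^ 2 with hs_def
    have hsS : HasSum (fun i => ‖Θ i f‖ ^ 2) s := hΘsum.hasSum
    have hs0 : 0 ≤ s := tsum_nonneg fun i => sq_nonneg _
    refine ⟨s, hsS, ?_, ?_⟩
    · -- lower bound
      have hΛle : ∀ i, a i ≤ ‖Θ i f‖ + b i := by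
        intro i
        have : Λ i f = Θ i f - (Θ i - Λ i) f := by simp [sub_apply]
        calc a i = ‖Θ i f - (Θ i - Λ i) f‖ := by rw [ha_def]; simp only []; rw [this]
          _ ≤ ‖Θ i f‖ + ‖(Θ i - Λ i) f‖ := norm_sub_le _ _
      have hmink2 := minkowski_aux (a := fun i => ‖Θ i f‖) (b := b)
        (fun i => norm_nonneg _) (fun i => norm_nonneg _) hsS hsd
      have hle1 : sΛ ≤ (Real.sqrt s + Real.sqrt sd) ^ 2 := by
        calc sΛ = ∑' i, a i ^ 2 := hsΛ.tsum_eq.symm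
          _ ≤ ∑' i, (‖Θ i f‖ + b i) ^ 2 := by
              apply Summable.tsum_le_tsum (fun i => pow_le_pow_left₀ (norm_nonneg _) (hΛle i) 2)
                hsΛ.summable hmink2.1
          _ ≤ (Real.sqrt s + Real.sqrt sd) ^ 2 := hmink2.2
      have hle2 : Real.sqrt AΛ * ‖f‖ ≤ Real.sqrt s + Real.sqrt sd := by
        have h1 : Real.sqrt (AΛ * ‖f‖ ^ 2) ≤ Real.sqrt sΛ := Real.sqrt_le_sqrt hlo
        rw [Real.sqrt_mul hAΛ.le, Real.sqrt_sq (norm_nonneg f)] at h1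
        have h2 : Real.sqrt sΛ ≤ Real.sqrt s + Real.sqrt sd := by
          have := Real.sqrt_le_sqrt hle1
          rwa [Real.sqrt_sq (by positivity)] at this
        linarith
      have hle3 : Real.sqrt sd ≤ Real.sqrt BΘΛ * ‖f‖ := by
        have h1 : Real.sqrt sd ≤ Real.sqrt (BΘΛ * ‖f‖ ^ 2) := Real.sqrt_le_sqrt hdhi
        rwa [Real.sqrt_mul hBΘΛ0, Real.sqrt_sq (norm_nonneg f)] at h1
      have ht : (Real.sqrt AΛ - Real.sqrt BΘΛ) * ‖f‖ ≤ Real.sqrt s := by nlinarith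
      have := pow_le_pow_left₀ (mul_nonneg (sub_pos.mpr hsq).le (norm_nonneg f)) ht 2
      rw [Real.sq_sqrt hs0] at this
      calc (Real.sqrt AΛ - Real.sqrt BΘΛ) ^ 2 * ‖f‖ ^ 2
          = ((Real.sqrt AΛ - Real.sqrt BΘΛ) * ‖f‖) ^ 2 := by ring
        _ ≤ s := this
    · -- upper bound
      have hle1 : s ≤ (Real.sqrt sΛ + Real.sqrt sd) ^ 2 := by
        calc s ≤ ∑' i, (a i + b i) ^ 2 := by
              apply Summable.tsum_le_tsum (fun i => pow_le_pow_left₀ (norm_nonneg _) (hΘle i) 2)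
                hΘsum hmink.1
          _ ≤ (Real.sqrt sΛ + Real.sqrt sd) ^ 2 := hmink.2
      have h1 : Real.sqrt sΛ ≤ Real.sqrt BΛ * ‖f‖ := by
        have := Real.sqrt_le_sqrt hhi
        rwa [Real.sqrt_mul hBΛ.le, Real.sqrt_sq (norm_nonneg f)] at this
      have h2 : Real.sqrt sd ≤ Real.sqrt BΘΛ * ‖f‖ := by
        have := Real.sqrt_le_sqrt hdhi
        rwa [Real.sqrt_mul hBΘΛ0, Real.sqrt_sq (norm_nonneg f)] at this
      nlinarith [Real.sqrt_nonneg sΛ, Real.sqrt_nonneg sd, Real.sqrt_nonneg BΛ,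
        Real.sqrt_nonneg BΘΛ, norm_nonneg f]
end

section
/- Let Λ be a g-frame for H with upper bound B_Λ, let Λ^d be a dual g-frame of Λ, and suppose there exists μ ∈ [0, 1/B_Λ) such that ∑_i ‖(m_i Θ_i − Λ_i^d)f‖² ≤ μ‖f‖² for all f ∈ H. Then M_{m,Λ,Θ} is invertible on H with ‖h‖/(1 + √(μ B_Λ)) ≤ ‖M_{m,Λ,Θ}^{-1} h‖ ≤ ‖h‖/(1 − √(μ B_Λ)), and M_{m,Λ,Θ}^{-1} = ∑_{k=0}^{∞} (I − M_{m,Λ,Θ})^k. -/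
/-!
Since `Λᵈ` is a dual of `Λ`, `(M - 1) f = ∑ Λᵢ* ((mᵢ Θᵢ - Λᵢᵈ) f)`. Pairing with `(M - 1) f` and
applying Cauchy–Schwarz together with the Bessel bound of `Λ` and the perturbation bound gives
`‖(1 - M) f‖ ≤ √(μ B_Λ) ‖f‖`. As `√(μ B_Λ) < 1`, `M` is inverted by its Neumann series, and the norm
bounds on `M⁻¹` follow from the triangle inequality.
-/

open ContinuousLinearMap
local notation "⟪" x ", " y "⟫" => @inner ℂ _ _ x y

theorem norm_le_sqrt_mul_sqrt_of_hasSum_inner {𝕜 J : Type*} [RCLike 𝕜] {E : J → Type*}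
    [∀ i, NormedAddCommGroup (E i)] [∀ i, InnerProductSpace 𝕜 (E i)] {x y : ∀ i, E i}
    {a b : ℝ} {c : 𝕜} (hc : HasSum (fun i => inner 𝕜 (x i) (y i)) c)
    (ha : HasSum (fun i => ‖x i‖ ^ 2) a) (hb : HasSum (fun i => ‖y i‖ ^ 2) b) :
    ‖c‖ ≤ √a * √b := by
  refine le_of_tendsto' hc.norm fun s => ?_
  calc ‖∑ i ∈ s, inner 𝕜 (x i) (y i)‖
      ≤ ∑ i ∈ s, ‖x i‖ * ‖y i‖ :=
        (norm_sum_le _ _).trans (Finset.sum_le_sum fun i _ => norm_inner_le_norm _ _)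
    _ ≤ √(∑ i ∈ s, ‖x i‖ ^ 2) * √(∑ i ∈ s, ‖y i‖ ^ 2) := Real.sum_mul_le_sqrt_mul_sqrt _ _ _
    _ ≤ √a * √b := by
      gcongr
      · exact sum_le_hasSum s (fun i _ => by positivity) ha
      · exact sum_le_hasSum s (fun i _ => by positivity) hb

theorem norm_le_of_hasSum_adjoint {𝕜 H J : Type*} [RCLike 𝕜] [NormedAddCommGroup H]
    [InnerProductSpace 𝕜 H] [CompleteSpace H] {E : J → Type*} [∀ i, NormedAddCommGroup (E i)]
    [∀ i, InnerProductSpace 𝕜 (E i)] [∀ i, CompleteSpace (E i)] {Λ : ∀ i, H →L[𝕜] E i}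
    {y : ∀ i, E i} {g : H} {B b s : ℝ}
    (hg : HasSum (fun i => adjoint (Λ i) (y i)) g) (hy : HasSum (fun i => ‖y i‖ ^ 2) b)
    (hs : HasSum (fun i => ‖Λ i g‖ ^ 2) s) (hsB : s ≤ B * ‖g‖ ^ 2) :
    ‖g‖ ≤ √B * √b := by
  have hinner : HasSum (fun i => inner 𝕜 (Λ i g) (y i)) (inner 𝕜 g g) := by
    simpa only [innerSL_apply_apply, adjoint_inner_right] using (innerSL 𝕜 g).hasSum hg
  have hsq : ‖g‖ ^ 2 ≤ (√B * √b) * ‖g‖ :=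
    calc ‖g‖ ^ 2
        = ‖inner 𝕜 g g‖ := by
          rw [inner_self_eq_norm_sq_to_K, norm_pow, RCLike.norm_ofReal, abs_norm]
      _ ≤ √s * √b := norm_le_sqrt_mul_sqrt_of_hasSum_inner hinner hs hy
      _ ≤ √(B * ‖g‖ ^ 2) * √b := by gcongr
      _ = (√B * √b) * ‖g‖ := by
        rw [Real.sqrt_mul' _ (by positivity), Real.sqrt_sq (norm_nonneg g)]; ring
  rcases (norm_nonneg g).eq_or_lt with hg0 | hg0
  · rw [← hg0]; positivity
  · nlinarith

section

variable {E : Type*} [SeminormedAddCommGroup E] {x y : E} {r : ℝ}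

theorem div_one_add_le_norm_of_norm_sub_le (hr : 0 ≤ r) (h : ‖x - y‖ ≤ r * ‖x‖) :
    ‖y‖ / (1 + r) ≤ ‖x‖ := by
  rw [div_le_iff₀ (by linarith)]
  linarith [norm_le_norm_add_norm_sub' y x, norm_sub_rev x y]

theorem norm_le_div_one_sub_of_norm_sub_le (hr : r < 1) (h : ‖x - y‖ ≤ r * ‖x‖) :
    ‖x‖ ≤ ‖y‖ / (1 - r) := by
  rw [le_div_iff₀ (by linarith)]
  linarith [norm_le_norm_add_norm_sub' x y]

end

theorem norm_one_sub_apply_le_of_hasSum_dual {𝕜 H J : Type*} [RCLike 𝕜] [NormedAddCommGroup H]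
    [InnerProductSpace 𝕜 H] [CompleteSpace H] {E : J → Type*} [∀ i, NormedAddCommGroup (E i)]
    [∀ i, InnerProductSpace 𝕜 (E i)] [∀ i, CompleteSpace (E i)] {Λ Λd Θ : ∀ i, H →L[𝕜] E i}
    {m : J → 𝕜} {B μ : ℝ} {M : H →L[𝕜] H}
    (hΛ : ∀ g : H, ∃ s : ℝ, HasSum (fun i => ‖Λ i g‖ ^ 2) s ∧ s ≤ B * ‖g‖ ^ 2)
    (hdual : ∀ f : H, HasSum (fun i => adjoint (Λ i) (Λd i f)) f) (hμ0 : 0 ≤ μ)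
    (hperturb : ∀ f : H, ∃ s : ℝ,
      HasSum (fun i => ‖m i • Θ i f - Λd i f‖ ^ 2) s ∧ s ≤ μ * ‖f‖ ^ 2)
    (hM : ∀ f : H, HasSum (fun i => m i • adjoint (Λ i) (Θ i f)) (M f)) (f : H) :
    ‖(1 - M) f‖ ≤ √(μ * B) * ‖f‖ := by
  obtain ⟨sp, hsp, hspμ⟩ := hperturb f
  obtain ⟨sg, hsg, hsgB⟩ := hΛ (M f - f)
  have hsyn : HasSum (fun i => adjoint (Λ i) (m i • Θ i f - Λd i f)) (M f - f) := by
    simpa only [map_sub, map_smul] using (hM f).sub (hdual f)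
  calc ‖(1 - M) f‖
      = ‖M f - f‖ := by rw [_root_.sub_apply, one_apply_eq_self, norm_sub_rev]
    _ ≤ √B * √sp := norm_le_of_hasSum_adjoint hsyn hsp hsg hsgB
    _ ≤ √B * √(μ * ‖f‖ ^ 2) := by gcongr
    _ = √(μ * B) * ‖f‖ := by
      rw [Real.sqrt_mul hμ0, Real.sqrt_sq (norm_nonneg f), Real.sqrt_mul hμ0]; ring

theorem exists_inverse_hasSum_geometric_one_sub {R : Type*} [NormedRing R]
    [HasSummableGeomSeries R] {a : R} (h : ‖1 - a‖ < 1) :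
    ∃ b : R, a * b = 1 ∧ b * a = 1 ∧ HasSum (fun k : ℕ => (1 - a) ^ k) b := by
  refine ⟨∑' k : ℕ, (1 - a) ^ k, ?_, ?_, (summable_geometric_of_norm_lt_one h).hasSum⟩
  · simpa only [sub_sub_cancel] using mul_neg_geom_series (1 - a) h
  · simpa only [sub_sub_cancel] using geom_series_mul_neg (1 - a) h

theorem stmt12_general {H : Type*} [NormedAddCommGroup H] [InnerProductSpace ℂ H] [CompleteSpace H]
    {J : Type*} {Hi : J → Type*} [∀ i, NormedAddCommGroup (Hi i)]
    [∀ i, InnerProductSpace ℂ (Hi i)] [∀ i, CompleteSpace (Hi i)]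
    (Λ Λd Θ : ∀ i, H →L[ℂ] Hi i) (m : J → ℂ) (AΛ BΛ μ : ℝ)
    (hΛ : ∀ f : H, ∃ s : ℝ, HasSum (fun i => ‖Λ i f‖ ^ 2) s ∧
      AΛ * ‖f‖ ^ 2 ≤ s ∧ s ≤ BΛ * ‖f‖ ^ 2)
    (hdual : ∀ f : H, HasSum (fun i => adjoint (Λ i) (Λd i f)) f)
    (hμ0 : 0 ≤ μ) (hμ : μ < 1 / BΛ)
    (hperturb : ∀ f : H, ∃ s : ℝ,
      HasSum (fun i => ‖m i • Θ i f - Λd i f‖ ^ 2) s ∧ s ≤ μ * ‖f‖ ^ 2)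
    (M : H →L[ℂ] H)
    (hM : ∀ f : H, HasSum (fun i => m i • adjoint (Λ i) (Θ i f)) (M f)) :
    ∃ Minv : H →L[ℂ] H, M * Minv = 1 ∧ Minv * M = 1 ∧
      (∀ h : H, ‖h‖ / (1 + Real.sqrt (μ * BΛ)) ≤ ‖Minv h‖ ∧
        ‖Minv h‖ ≤ ‖h‖ / (1 - Real.sqrt (μ * BΛ))) ∧
      (∀ f : H, HasSum (fun k : ℕ => ((1 - M) ^ k) f) (Minv f)) := by
  have hB : 0 < BΛ := one_div_pos.mp (hμ0.trans_lt hμ)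
  have hr1 : √(μ * BΛ) < 1 := by
    rw [Real.sqrt_lt' one_pos, one_pow, ← lt_div_iff₀ hB]
    exact hμ
  have hcontr : ∀ f : H, ‖(1 - M) f‖ ≤ √(μ * BΛ) * ‖f‖ :=
    norm_one_sub_apply_le_of_hasSum_dual (fun g => (hΛ g).imp fun _ hs => ⟨hs.1, hs.2.2⟩)
      hdual hμ0 hperturb hM
  have hnorm : ‖1 - M‖ < 1 := (opNorm_le_bound _ (Real.sqrt_nonneg _) hcontr).trans_lt hr1
  obtain ⟨Minv, hMMinv, hMinvM, hNeumann⟩ := exists_inverse_hasSum_geometric_one_sub hnorm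
  refine ⟨Minv, hMMinv, hMinvM, fun h => ?_, fun f => hNeumann.mapL (apply ℂ H f)⟩
  have hMinv_h : ‖Minv h - h‖ ≤ √(μ * BΛ) * ‖Minv h‖ := by
    have := hcontr (Minv h)
    rwa [_root_.sub_apply, one_apply_eq_self, ← mul_apply_eq_comp, hMMinv,
      one_apply_eq_self] at this
  exact ⟨div_one_add_le_norm_of_norm_sub_le (Real.sqrt_nonneg _) hMinv_h,
    norm_le_div_one_sub_of_norm_sub_le hr1 hMinv_h⟩

theorem stmt12 {H : Type*} [NormedAddCommGroup H] [InnerProductSpace ℂ H] [CompleteSpace H]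
    {J : Type*} {Hi : J → Type*} [∀ i, NormedAddCommGroup (Hi i)]
    [∀ i, InnerProductSpace ℂ (Hi i)] [∀ i, CompleteSpace (Hi i)]
    (Λ Λd Θ : ∀ i, H →L[ℂ] Hi i) (m : J → ℂ) (AΛ BΛ μ : ℝ) (hAΛ : 0 < AΛ)
    (hΛ : ∀ f : H, ∃ s : ℝ, HasSum (fun i => ‖Λ i f‖ ^ 2) s ∧
      AΛ * ‖f‖ ^ 2 ≤ s ∧ s ≤ BΛ * ‖f‖ ^ 2)
    (hdual : ∀ f : H, HasSum (fun i => adjoint (Λ i) (Λd i f)) f)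
    (hμ0 : 0 ≤ μ) (hμ : μ < 1 / BΛ)
    (hperturb : ∀ f : H, ∃ s : ℝ,
      HasSum (fun i => ‖m i • Θ i f - Λd i f‖ ^ 2) s ∧ s ≤ μ * ‖f‖ ^ 2)
    (M : H →L[ℂ] H)
    (hM : ∀ f : H, HasSum (fun i => m i • adjoint (Λ i) (Θ i f)) (M f)) :
    ∃ Minv : H →L[ℂ] H, M * Minv = 1 ∧ Minv * M = 1 ∧
      (∀ h : H, ‖h‖ / (1 + Real.sqrt (μ * BΛ)) ≤ ‖Minv h‖ ∧
        ‖Minv h‖ ≤ ‖h‖ / (1 - Real.sqrt (μ * BΛ))) ∧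
      (∀ f : H, HasSum (fun k : ℕ => ((1 - M) ^ k) f) (Minv f)) :=
  stmt12_general Λ Λd Θ m AΛ BΛ μ hΛ hdual hμ0 hμ hperturb M hM
end

section
/- Let C ∈ GL(H) be self-adjoint, {Λ_i} a C-controlled g-frame for H, and suppose CΛ_i* = w_i Λ_i* for scalars w_i and all i ∈ J. Then the sequence (w_i) is positive and semi-normalized: there exist 0 < a ≤ b with a ≤ w_i ≤ b for all i. -/
/-!
Every nonzero vector `f` in the range of `Λ i†` is an eigenvector of `C` for `w i`. Since `C` is
self-adjoint, `w i` is real; the lower controlled frame bound at `f` reads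
`m ‖f‖² ≤ (w i) ∑ ‖Λ j f‖²`, so `w i > 0`; and any eigenvalue of `C` lies between `‖C⁻¹‖⁻¹`
and `‖C‖` in absolute value.
-/

open ContinuousLinearMap
local notation "⟪" x ", " y "⟫" => @inner ℂ _ _ x y

open Module.End

section Eigenvectors

variable {𝕜 E F : Type*} [NontriviallyNormedField 𝕜] [NormedAddCommGroup E] [NormedSpace 𝕜 E]
  [NormedAddCommGroup F] [NormedSpace 𝕜 F]

theorem exists_hasEigenvector_of_comp_eq_smul {C : E →L[𝕜] E} {A : F →L[𝕜] E} {w : 𝕜}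
    (hA : A ≠ 0) (hCA : C.comp A = w • A) : ∃ f, HasEigenvector (C : E →ₗ[𝕜] E) w f := by
  obtain ⟨g, hg⟩ : ∃ g, A g ≠ 0 := by
    by_contra! h
    exact hA (ContinuousLinearMap.ext h)
  exact ⟨A g, mem_eigenspace_iff.mpr (by simpa using congr($hCA g)), hg⟩

theorem norm_le_opNorm_of_hasEigenvector {C : E →L[𝕜] E} {w : 𝕜} {f : E}
    (hf : HasEigenvector (C : E →ₗ[𝕜] E) w f) : ‖w‖ ≤ ‖C‖ := by
  have hf0 : 0 < ‖f‖ := norm_pos_iff.mpr hf.2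
  refine le_of_mul_le_mul_right ?_ hf0
  calc ‖w‖ * ‖f‖ = ‖C f‖ := by rw [← norm_smul, ← hf.apply_eq_smul]; rfl
    _ ≤ ‖C‖ * ‖f‖ := C.le_opNorm f

theorem inv_opNorm_le_norm_of_hasEigenvector {C Cinv : E →L[𝕜] E} (hCinv : Cinv * C = 1)
    {w : 𝕜} {f : E} (hf : HasEigenvector (C : E →ₗ[𝕜] E) w f) : ‖Cinv‖⁻¹ ≤ ‖w‖ := by
  have hf0 : 0 < ‖f‖ := norm_pos_iff.mpr hf.2
  have hfix : w • Cinv f = f := by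
    rw [← map_smul, ← show C f = w • f from hf.apply_eq_smul]
    exact congr($hCinv f)
  have h1 : 1 ≤ ‖w‖ * ‖Cinv‖ := by
    refine le_of_mul_le_mul_right ?_ hf0
    calc 1 * ‖f‖ = ‖w • Cinv f‖ := by rw [hfix, one_mul]
      _ ≤ ‖w‖ * (‖Cinv‖ * ‖f‖) := by rw [norm_smul]; gcongr; exact Cinv.le_opNorm f
      _ = ‖w‖ * ‖Cinv‖ * ‖f‖ := by ring
  have hCinv0 : 0 < ‖Cinv‖ := pos_of_mul_pos_right (one_pos.trans_le h1) (norm_nonneg w)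
  exact (inv_le_iff_one_le_mul₀ hCinv0).mpr h1

end Eigenvectors

theorem IsSelfAdjoint.im_eq_zero_of_hasEigenvector {E : Type*} [NormedAddCommGroup E]
    [InnerProductSpace ℂ E] [CompleteSpace E] {C : E →L[ℂ] E} (hC : IsSelfAdjoint C) {w : ℂ} {f : E}
    (hf : HasEigenvector (C : E →ₗ[ℂ] E) w f) : w.im = 0 :=
  Complex.conj_eq_iff_im.mp <|
    hC.isSymmetric.conj_eigenvalue_eq_self (hasEigenvalue_of_hasEigenvector hf)

theorem re_pos_of_hasEigenvector_of_lower_bound {H J : Type*} {Hi : J → Type*}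
    [NormedAddCommGroup H] [InnerProductSpace ℂ H] [CompleteSpace H]
    [∀ i, NormedAddCommGroup (Hi i)] [∀ i, InnerProductSpace ℂ (Hi i)]
    (Λ : ∀ i, H →L[ℂ] Hi i) {C : H →L[ℂ] H} (hC : IsSelfAdjoint C) {w : ℂ} {f : H}
    (hf : HasEigenvector (C : H →ₗ[ℂ] H) w f) {m : ℝ} (hm : 0 < m)
    (hlow : m * ‖f‖ ^ 2 ≤ (∑' j, ⟪Λ j (adjoint C f), Λ j f⟫).re) : 0 < w.re := by
  have hCf : C f = w • f := hf.apply_eq_smul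
  have hsum : ∑' j, ⟪Λ j (adjoint C f), Λ j f⟫ =
      starRingEnd ℂ w * ((∑' j, ‖Λ j f‖ ^ 2 : ℝ) : ℂ) := by
    simp_rw [hC.adjoint_eq, hCf, map_smul, inner_smul_left, inner_self_eq_norm_sq_to_K]
    rw [tsum_mul_left, Complex.ofReal_tsum]
    push_cast
    rfl
  rw [hsum, Complex.re_mul_ofReal, Complex.conj_re] at hlow
  have hf0 : 0 < m * ‖f‖ ^ 2 := by have := norm_pos_iff.mpr hf.2; positivity
  exact pos_of_mul_pos_left (hf0.trans_le hlow) (tsum_nonneg fun j => by positivity)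

theorem stmt19 {H : Type*} [NormedAddCommGroup H] [InnerProductSpace ℂ H] [CompleteSpace H]
    {J : Type*} {Hi : J → Type*} [∀ i, NormedAddCommGroup (Hi i)]
    [∀ i, InnerProductSpace ℂ (Hi i)] [∀ i, CompleteSpace (Hi i)]
    (Λ : ∀ i, H →L[ℂ] Hi i) (hΛ : ∀ i, Λ i ≠ 0)
    (C Cinv : H →L[ℂ] H) (hC : IsSelfAdjoint C) (hCinv : C * Cinv = 1 ∧ Cinv * C = 1)
    (mCL MCL : ℝ) (hmCL : 0 < mCL)
    (hcontrolled : ∀ f : H,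
      Summable (fun i => ⟪Λ i (adjoint C f), Λ i f⟫) ∧
      mCL * ‖f‖ ^ 2 ≤ (∑' i, ⟪Λ i (adjoint C f), Λ i f⟫).re ∧
      (∑' i, ⟪Λ i (adjoint C f), Λ i f⟫).re ≤ MCL * ‖f‖ ^ 2)
    (w : J → ℂ)
    (hw : ∀ i, C.comp (adjoint (Λ i)) = w i • adjoint (Λ i)) :
    ∃ a b : ℝ, 0 < a ∧ a ≤ b ∧ ∀ i,
      (w i).im = 0 ∧ a ≤ (w i).re ∧ (w i).re ≤ b := by
  choose f hf using fun i => exists_hasEigenvector_of_comp_eq_smul (by simpa using hΛ i) (hw i)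
  have key i : (w i).im = 0 ∧ ‖Cinv‖⁻¹ ≤ (w i).re ∧ (w i).re ≤ ‖C‖ := by
    have him := hC.im_eq_zero_of_hasEigenvector (hf i)
    have hre := re_pos_of_hasEigenvector_of_lower_bound Λ hC (hf i) hmCL (hcontrolled (f i)).2.1
    have hnorm : ‖w i‖ = (w i).re := (Complex.abs_re_eq_norm.mpr him).symm.trans (abs_of_pos hre)
    exact ⟨him, hnorm ▸ inv_opNorm_le_norm_of_hasEigenvector hCinv.2 (hf i),
      hnorm ▸ norm_le_opNorm_of_hasEigenvector (hf i)⟩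
  rcases isEmpty_or_nonempty J with hJ | ⟨⟨i₀⟩⟩
  · exact ⟨1, 1, one_pos, le_rfl, isEmptyElim⟩
  have : Nontrivial H := nontrivial_of_ne (f i₀) 0 (hf i₀).2
  have hCinv0 : 0 < ‖Cinv‖⁻¹ := inv_pos.mpr (norm_pos_iff.mpr (left_ne_zero_of_mul_eq_one hCinv.2))
  exact ⟨_, _, hCinv0, (key i₀).2.1.trans (key i₀).2.2, key⟩
end
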